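/- arXiv:1006.1339 — 2 statements merged into one kernel-verified Lean document; each statement's English description precedes it below -/
import Mathlib

section
/- Let n ≥ 3 and let V : ℤ → ℝ² be an origin-symmetric star-shaped 2n-gon in normalized form, and let V* be the dual polygon with vertices V*_i = V_{i+1} − V_i. Then the signed areas satisfy A(V)·A(V*) ≤ 4n²·sin²(π/(2n)), with equality if and only if [V_{i−1}, V_{i+1}] = 2·cos(π/n) for all i (i.e. exactly for centro-affine regular 2n-gons). -/
/-- The standard area form on the plane: `[v,w] = v₁w₂ − v₂w₁`. -/
def areaForm (v w : ℝ × ℝ) : ℝ := v.1 * w.2 - v.2 * w.1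

/-- The signed area of a closed polygon with `2n` vertices `W 0, …, W (2n−1)`
(indices mod `2n`): `A(W) = (1/2) ∑_{i=0}^{2n−1} [W i, W (i+1)]`. -/
noncomputable def signedArea (n : ℕ) (W : ℤ → ℝ × ℝ) : ℝ :=
  (1 / 2) * ∑ i ∈ Finset.range (2 * n), areaForm (W i) (W (i + 1))

lemma plucker (a b c w : ℝ × ℝ) :
    areaForm c w * areaForm a b = areaForm c b * areaForm a w - areaForm c a * areaForm b w := by
  simp only [areaForm]; ring

lemma areaForm_self (a : ℝ × ℝ) : areaForm a a = 0 := by simp only [areaForm]; ring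

lemma areaForm_swap (a b : ℝ × ℝ) : areaForm a b = - areaForm b a := by simp only [areaForm]; ring

lemma tangent_le {p q : ℝ} (hp : 0 < p) (hq : 0 < q) :
    q * (Real.log p - Real.log q) ≤ p - q := by
  have h := Real.log_le_sub_one_of_pos (show 0 < p/q by positivity)
  rw [Real.log_div hp.ne' hq.ne'] at h
  have h2 := mul_le_mul_of_nonneg_left h hq.le
  have h3 : q * (p/q - 1) = p - q := by field_simp
  linarith

lemma tangent_eq {p q : ℝ} (hp : 0 < p) (hq : 0 < q)
    (h : q * (Real.log p - Real.log q) = p - q) : p = q := by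
  by_contra hne
  have hne' : p / q ≠ 1 := by
    intro hc
    rw [div_eq_one_iff_eq hq.ne'] at hc
    exact hne hc
  have h2 := Real.log_lt_sub_one_of_pos (show 0 < p/q by positivity) hne'
  rw [Real.log_div hp.ne' hq.ne'] at h2
  have h3 := mul_lt_mul_of_pos_left h2 hq
  have h4 : q * (p/q - 1) = p - q := by field_simp
  linarith

set_option maxHeartbeats 800000 in
lemma key {s cc a b A B u v : ℝ} (hs : 0 < s) (ha : 0 < a) (hA : 0 < A)
    (hab : a^2 + b^2 = 1) (hsc : s^2 + cc^2 = 1)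
    (hAd : A = a*cc + b*s) (hBd : B = b*cc - a*s)
    (hu : 0 < u) (hv : 0 < v) :
    2*cc + (2*s*(b/a)*(1 - Real.log (s*u/a)) - 2*s*(B/A)*(1 - Real.log (s*v/A)))
      ≤ u/v + v/u + 1/(u*v) ∧
    ((2*cc + (2*s*(b/a)*(1 - Real.log (s*u/a)) - 2*s*(B/A)*(1 - Real.log (s*v/A)))
      = u/v + v/u + 1/(u*v)) ↔ (u = a/s ∧ v = A/s)) := by
  have J1 : a^2 - A^2 - s^2 = -(2*s*b*A) := by
    rw [hAd]; linear_combination s^2*hab - a^2*hsc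
  have J2 : A^2 - a^2 - s^2 = 2*s*a*B := by
    rw [hAd, hBd]; linear_combination a^2*hsc + s^2*hab
  have J5 : b*A - B*a = s := by
    rw [hAd, hBd]; linear_combination s*hab
  have J6 : a^2 + A^2 - 2*cc*(a*A) = s^2 := by
    rw [hAd]; linear_combination s^2*hab - a^2*hsc
  obtain ⟨U, hU⟩ : ∃ U, s*u/a = U := ⟨_, rfl⟩
  obtain ⟨W, hW⟩ : ∃ W, s*v/A = W := ⟨_, rfl⟩
  rw [hU, hW]
  have hUpos : 0 < U := by rw [← hU]; positivity
  have hWpos : 0 < W := by rw [← hW]; positivity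
  obtain ⟨lU, hlU⟩ : ∃ l, Real.log U = l := ⟨_, rfl⟩
  obtain ⟨lW, hlW⟩ : ∃ l, Real.log W = l := ⟨_, rfl⟩
  rw [hlU, hlW]
  -- the tangent-line bounds
  have t1 : lU - lW ≤ U/W - 1 := by
    have h := Real.log_le_sub_one_of_pos (show (0:ℝ) < U/W by positivity)
    rwa [Real.log_div hUpos.ne' hWpos.ne', hlU, hlW] at h
  have t2 : lW - lU ≤ W/U - 1 := by
    have h := Real.log_le_sub_one_of_pos (show (0:ℝ) < W/U by positivity)
    rwa [Real.log_div hWpos.ne' hUpos.ne', hlU, hlW] at h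
  have t3 : -(lU + lW) ≤ 1/(U*W) - 1 := by
    have h := Real.log_le_sub_one_of_pos (show (0:ℝ) < 1/(U*W) by positivity)
    rwa [one_div, Real.log_inv, Real.log_mul hUpos.ne' hWpos.ne', hlU, hlW, ← one_div] at h
  -- substitution identity
  have hsum : u/v + v/u + 1/(u*v)
      = (a/A)*(U/W) + (A/a)*(W/U) + (s^2/(a*A))*(1/(U*W)) := by
    rw [← hU, ← hW]; field_simp
  -- the cleared tangent-plane identity
  have hstarc : a^2*(1 + (lU - lW)) + A^2*(1 + (lW - lU)) + s^2*(1 - (lU + lW))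
      = 2*cc*(a*A) + 2*s*b*A*(1 - lU) - 2*s*B*a*(1 - lW) := by
    linear_combination lU*J1 + lW*J2 - 2*s*J5 + J6
  have e1 : (a/A)*(1 + (lU - lW)) + (A/a)*(1 + (lW - lU)) + (s^2/(a*A))*(1 - (lU + lW))
      = (a^2*(1 + (lU - lW)) + A^2*(1 + (lW - lU)) + s^2*(1 - (lU + lW)))/(a*A) := by
    field_simp
  have e2 : 2*cc + (2*s*(b/a)*(1 - lU) - 2*s*(B/A)*(1 - lW))
      = (2*cc*(a*A) + 2*s*b*A*(1 - lU) - 2*s*B*a*(1 - lW))/(a*A) := by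
    field_simp; ring
  have htar : 2*cc + (2*s*(b/a)*(1 - lU) - 2*s*(B/A)*(1 - lW))
      = (a/A)*(1 + (lU - lW)) + (A/a)*(1 + (lW - lU)) + (s^2/(a*A))*(1 - (lU + lW)) := by
    rw [e1, e2, hstarc]
  have c1pos : (0:ℝ) < a/A := by positivity
  have c2pos : (0:ℝ) < A/a := by positivity
  have c3pos : (0:ℝ) < s^2/(a*A) := by positivity
  have m1 : (a/A)*(1 + (lU - lW)) ≤ (a/A)*(U/W) :=
    mul_le_mul_of_nonneg_left (by linarith) c1pos.le
  have m2 : (A/a)*(1 + (lW - lU)) ≤ (A/a)*(W/U) :=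
    mul_le_mul_of_nonneg_left (by linarith) c2pos.le
  have m3 : (s^2/(a*A))*(1 - (lU + lW)) ≤ (s^2/(a*A))*(1/(U*W)) :=
    mul_le_mul_of_nonneg_left (by linarith) c3pos.le
  constructor
  · rw [htar, hsum]; linarith
  constructor
  · -- equality implies pinned values
    intro heq
    rw [htar, hsum] at heq
    have e1eq : (a/A)*(U/W) = (a/A)*(1 + (lU - lW)) := by linarith
    have e3eq : (s^2/(a*A))*(1/(U*W)) = (s^2/(a*A))*(1 - (lU + lW)) := by linarith
    have g1' : U/W = 1 + (lU - lW) := mul_left_cancel₀ c1pos.ne' e1eq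
    have g3' : 1/(U*W) = 1 - (lU + lW) := mul_left_cancel₀ c3pos.ne' e3eq
    -- strictness forces U/W = 1 and U*W = 1
    have hUW : U/W = 1 := by
      by_contra hne
      have h := Real.log_lt_sub_one_of_pos (show (0:ℝ) < U/W by positivity) hne
      rw [Real.log_div hUpos.ne' hWpos.ne', hlU, hlW] at h
      linarith
    have hUW2 : 1/(U*W) = 1 := by
      by_contra hne
      have h := Real.log_lt_sub_one_of_pos (show (0:ℝ) < 1/(U*W) by positivity) hne
      rw [one_div, Real.log_inv, Real.log_mul hUpos.ne' hWpos.ne', hlU, hlW] at h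
      rw [one_div] at g3'
      linarith
    have hUeqW : U = W := by
      rw [div_eq_one_iff_eq hWpos.ne'] at hUW; exact hUW
    have hprod : U*W = 1 := by
      rw [div_eq_one_iff_eq (by positivity : (U*W) ≠ 0)] at hUW2
      exact hUW2.symm
    have hU1 : U = 1 := by
      have h2 : U*U = 1 := by rw [← hUeqW] at hprod; exact hprod
      rcases mul_self_eq_one_iff.mp h2 with h | h
      · exact h
      · linarith
    have hW1 : W = 1 := by rw [← hUeqW]; exact hU1
    have hu' : u = a/s := by
      rw [← hU, div_eq_one_iff_eq ha.ne'] at hU1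
      rw [eq_div_iff hs.ne']; linarith
    have hv' : v = A/s := by
      rw [← hW, div_eq_one_iff_eq hA.ne'] at hW1
      rw [eq_div_iff hs.ne']; linarith
    exact ⟨hu', hv'⟩
  · -- pinned values imply equality
    rintro ⟨hu', hv'⟩
    have hU1 : U = 1 := by rw [← hU, hu']; field_simp
    have hW1 : W = 1 := by rw [← hW, hv']; field_simp
    have hlU0 : lU = 0 := by rw [← hlU, hU1, Real.log_one]
    have hlW0 : lW = 0 := by rw [← hlW, hW1, Real.log_one]
    rw [htar, hsum, hU1, hW1, hlU0, hlW0]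
    norm_num

lemma areaForm_neg_neg (a b : ℝ × ℝ) : areaForm (-a) (-b) = areaForm a b := by
  simp only [areaForm, Prod.fst_neg, Prod.snd_neg]; ring

lemma areaForm_neg_right (a b : ℝ × ℝ) : areaForm a (-b) = - areaForm a b := by
  simp only [areaForm, Prod.fst_neg, Prod.snd_neg]; ring


set_option maxHeartbeats 1600000 in
/-- **Theorem (polygonal Blaschke–Santaló inequality).** For an origin-symmetric
star-shaped `2n`-gon `V` in normalized form and its polar dual polygon
`V*_i = V (i+1) − V i`, the signed areas satisfy
`A(V)·A(V*) ≤ 4 n² sin² (π/(2n))`, with equality iff `[V (i−1), V (i+1)] = 2 cos (π/n)`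
for all `i` (i.e. exactly for centro-affine regular `2n`-gons). -/
theorem polygonal_blaschke_santalo (n : ℕ) (hn : 3 ≤ n) (V : ℤ → ℝ × ℝ)
    (hsym : ∀ i : ℤ, V (i + n) = -V i)
    (hunit : ∀ i : ℤ, areaForm (V i) (V (i + 1)) = 1)
    (hstar : ∀ i j : ℤ, 0 ≤ i → i < j → j ≤ (n : ℤ) - 1 → 0 < areaForm (V i) (V j))
    (Vd : ℤ → ℝ × ℝ) (hVd : ∀ i : ℤ, Vd i = V (i + 1) - V i) :
    signedArea n V * signedArea n Vd ≤ 4 * n ^ 2 * Real.sin (Real.pi / (2 * n)) ^ 2 ∧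
      (signedArea n V * signedArea n Vd = 4 * n ^ 2 * Real.sin (Real.pi / (2 * n)) ^ 2 ↔
        ∀ i : ℤ, areaForm (V (i - 1)) (V (i + 1)) = 2 * Real.cos (Real.pi / n)) := by
  have hn0 : 0 < n := by omega
  have hnR : (0:ℝ) < (n:ℝ) := by exact_mod_cast hn0
  set ω := Real.pi / n with hω
  have hωpos : 0 < ω := by rw [hω]; positivity
  have hωπ : (n:ℝ) * ω = Real.pi := by rw [hω]; field_simp
  have hsin : ∀ j : ℕ, 1 ≤ j → j ≤ n - 1 → 0 < Real.sin ((j:ℝ)*ω) := by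
    intro j h1 h2
    apply Real.sin_pos_of_pos_of_lt_pi
    · have hj : (0:ℝ) < (j:ℝ) := by exact_mod_cast h1
      positivity
    · have hjn : (j:ℝ) + 1 ≤ (n:ℝ) := by exact_mod_cast (by omega : j + 1 ≤ n)
      have h3 : (j:ℝ)*ω ≤ ((n:ℝ)-1)*ω := by nlinarith
      have h4 : ((n:ℝ)-1)*ω < (n:ℝ)*ω := by nlinarith
      calc (j:ℝ)*ω ≤ ((n:ℝ)-1)*ω := h3
        _ < (n:ℝ)*ω := h4
        _ = Real.pi := hωπ
  have hsω : 0 < Real.sin ω := by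
    have h := hsin 1 (le_refl 1) (by omega)
    simpa using h
  -- the invariants
  obtain ⟨T, hT⟩ : ∃ T : ℤ → ℝ, ∀ i, T i = areaForm (V i) (V (i + 2)) :=
    ⟨fun i => areaForm (V i) (V (i + 2)), fun _ => rfl⟩
  obtain ⟨X, hX⟩ : ∃ X : ℕ → ℝ, ∀ j, X j = areaForm (V 0) (V (j:ℤ)) :=
    ⟨fun j => areaForm (V 0) (V (j:ℤ)), fun _ => rfl⟩
  obtain ⟨Y, hY⟩ : ∃ Y : ℕ → ℝ, ∀ j, Y j = areaForm (V 1) (V (j:ℤ)) :=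
    ⟨fun j => areaForm (V 1) (V (j:ℤ)), fun _ => rfl⟩
  -- the master recurrence
  have hrecC : ∀ (w : ℝ × ℝ) (i : ℤ),
      areaForm w (V (i+2)) = T i * areaForm w (V (i+1)) - areaForm w (V i) := by
    intro w i
    have h1 := hunit i
    have h2 := hunit (i+1)
    rw [show i+1+1 = i+2 from by ring] at h2
    have hp := plucker (V i) (V (i+1)) w (V (i+2))
    rw [h1, h2, ← hT i] at hp
    linear_combination hp
  have hTper : ∀ i : ℤ, T (i + n) = T i := by
    intro i
    rw [hT, hT, show i + (n:ℤ) + 2 = (i+2) + (n:ℤ) from by ring, hsym i, hsym (i+2),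
      areaForm_neg_neg]
  -- X facts
  have hX0 : X 0 = 0 := by rw [hX]; norm_num [areaForm_self]
  have hX1 : X 1 = 1 := by
    rw [hX]
    have := hunit 0
    norm_num at this ⊢
    exact this
  have hXn : X n = 0 := by
    rw [hX]
    have h := hsym 0
    rw [zero_add] at h
    rw [h, areaForm_neg_right, areaForm_self]
    ring
  have hXn1 : X (n-1) = 1 := by
    rw [hX]
    have h := hunit ((n:ℤ)-1)
    rw [show (n:ℤ)-1+1 = (n:ℤ) from by ring] at h
    have h0 := hsym 0
    rw [zero_add] at h0
    rw [h0, areaForm_neg_right] at h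
    rw [show (((n-1:ℕ)):ℤ) = (n:ℤ)-1 from by omega]
    rw [areaForm_swap]
    linarith
  have hXpos : ∀ j : ℕ, 1 ≤ j → j ≤ n - 1 → 0 < X j := by
    intro j h1 h2
    rw [hX]
    apply hstar 0 (j:ℤ) (le_refl 0)
    · exact_mod_cast h1
    · have : (j:ℤ) ≤ (n:ℤ) - 1 := by omega
      exact this
  have hXrec : ∀ j : ℕ, X (j+2) = T (j:ℤ) * X (j+1) - X j := by
    intro j
    rw [hX (j+2), hX (j+1), hX j]
    have h := hrecC (V 0) (j:ℤ)
    push_cast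
    exact h
  -- Y facts
  have hY0 : Y 0 = -1 := by
    rw [hY]
    have := hunit 0
    rw [zero_add] at this
    norm_num [areaForm_swap (V 1) (V 0)]
    linarith [this]
  have hY1 : Y 1 = 0 := by rw [hY]; norm_num [areaForm_self]
  have hYrec : ∀ j : ℕ, Y (j+2) = T (j:ℤ) * Y (j+1) - Y j := by
    intro j
    rw [hY (j+2), hY (j+1), hY j]
    have h := hrecC (V 1) (j:ℤ)
    push_cast
    exact h
  have hWr : ∀ j : ℕ, X j * Y (j+1) - X (j+1) * Y j = 1 := by
    intro j
    induction j with
    | zero =>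
      rw [hX0, hX1, hY0, hY1]; ring
    | succ p ih =>
      rw [show p+1+1 = p+2 from rfl, hXrec p, hYrec p]
      linear_combination ih
  have hTn1 : T ((n:ℤ)-1) = Y (n-1) := by
    rw [hT, hY]
    rw [show (n:ℤ)-1+2 = 1 + (n:ℤ) from by ring, hsym 1, areaForm_neg_right]
    rw [show (((n-1:ℕ)):ℤ) = (n:ℤ)-1 from by omega]
    rw [areaForm_swap]
    ring
  -- Y as a reciprocal sum (discrete reduction of order)
  have hyform : ∀ p : ℕ, p + 2 ≤ n →
      Y (p+1) = X (p+1) * ∑ k ∈ Finset.range p, 1/(X (k+1) * X (k+2)) := by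
    intro p
    induction p with
    | zero => intro _; simp [hY1]
    | succ q ih =>
      intro hq
      have hIH := ih (by omega)
      have hw := hWr (q+1)
      have hx1 : 0 < X (q+1) := hXpos (q+1) (by omega) (by omega)
      have hx2 : 0 < X (q+2) := hXpos (q+2) (by omega) (by omega)
      rw [Finset.sum_range_succ, show q+1+1 = q+2 from rfl]
      rw [show q+1+1 = q+2 from rfl] at hw
      rw [hIH] at hw
      have hgoal : X (q+1) * Y (q+2) =
          X (q+1) * (X (q+2) * (∑ k ∈ Finset.range q, 1/(X (k+1) * X (k+2)) + 1/(X (q+1)*X (q+2)))) := by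
        field_simp
        linear_combination hw
      exact mul_left_cancel₀ hx1.ne' hgoal
  -- the sum of the T's over one period, in terms of X
  have hTdiv : ∀ i : ℕ, i < n - 1 → T (i:ℤ) = X i / X (i+1) + X (i+2) / X (i+1) := by
    intro i hi
    have hx := hXrec i
    have hpos := hXpos (i+1) (by omega) (by omega)
    rw [← add_div, eq_div_iff hpos.ne']
    linear_combination -hx
  have hs1 : ∑ i ∈ Finset.range (n-1), T (i:ℤ)
      = (∑ k ∈ Finset.range (n-2), X (k+1)/X (k+2)) + (∑ k ∈ Finset.range (n-2), X (k+2)/X (k+1)) := by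
    rw [Finset.sum_congr rfl (fun i hi => hTdiv i (Finset.mem_range.mp hi))]
    rw [Finset.sum_add_distrib]
    congr 1
    · rw [show n - 1 = (n-2) + 1 from by omega, Finset.sum_range_succ']
      rw [hX0]
      norm_num
    · rw [show n - 1 = (n-2) + 1 from by omega, Finset.sum_range_succ]
      rw [show n - 2 + 2 = n from by omega, hXn]
      norm_num
  have hsC : T ((n:ℤ)-1) = ∑ k ∈ Finset.range (n-2), 1/(X (k+1) * X (k+2)) := by
    rw [hTn1]
    have h := hyform (n-2) (by omega)
    rw [show n - 2 + 1 = n - 1 from by omega] at h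
    rw [h, hXn1, one_mul]
  obtain ⟨S, hS⟩ : ∃ S, S = ∑ i ∈ Finset.range n, T (i:ℤ) := ⟨_, rfl⟩
  have hterm_eq : S = ∑ k ∈ Finset.range (n-2),
      (X (k+1)/X (k+2) + X (k+2)/X (k+1) + 1/(X (k+1) * X (k+2))) := by
    rw [hS]
    conv_lhs => rw [show n = (n-1)+1 from by omega]
    rw [Finset.sum_range_succ]
    rw [show (((n-1:ℕ)):ℤ) = (n:ℤ)-1 from by omega]
    rw [hs1, hsC, ← Finset.sum_add_distrib, ← Finset.sum_add_distrib]
  -- the comparison function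
  obtain ⟨G, hG⟩ : ∃ G : ℕ → ℝ, ∀ j, G j =
      2*Real.sin ω*(Real.cos ((j:ℝ)*ω)/Real.sin ((j:ℝ)*ω))*(1 - Real.log (Real.sin ω * X j / Real.sin ((j:ℝ)*ω))) :=
    ⟨_, fun _ => rfl⟩
  have hkey : ∀ k, k < n - 2 →
      (2*Real.cos ω + (G (k+1) - G (k+2))
        ≤ X (k+1)/X (k+2) + X (k+2)/X (k+1) + 1/(X (k+1) * X (k+2))) ∧
      ((2*Real.cos ω + (G (k+1) - G (k+2))
        = X (k+1)/X (k+2) + X (k+2)/X (k+1) + 1/(X (k+1) * X (k+2)))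
        ↔ (X (k+1) = Real.sin ((↑(k+1):ℝ)*ω)/Real.sin ω ∧ X (k+2) = Real.sin ((↑(k+2):ℝ)*ω)/Real.sin ω)) := by
    intro k hk
    have ha := hsin (k+1) (by omega) (by omega)
    have hAp := hsin (k+2) (by omega) (by omega)
    have hu := hXpos (k+1) (by omega) (by omega)
    have hv := hXpos (k+2) (by omega) (by omega)
    have hAd : Real.sin ((↑(k+2):ℝ)*ω)
        = Real.sin ((↑(k+1):ℝ)*ω)*Real.cos ω + Real.cos ((↑(k+1):ℝ)*ω)*Real.sin ω := by
      rw [show ((↑(k+2):ℝ))*ω = (↑(k+1):ℝ)*ω + ω from by push_cast; ring, Real.sin_add]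
    have hBd : Real.cos ((↑(k+2):ℝ)*ω)
        = Real.cos ((↑(k+1):ℝ)*ω)*Real.cos ω - Real.sin ((↑(k+1):ℝ)*ω)*Real.sin ω := by
      rw [show ((↑(k+2):ℝ))*ω = (↑(k+1):ℝ)*ω + ω from by push_cast; ring, Real.cos_add]
    have hkk := key hsω ha hAp (Real.sin_sq_add_cos_sq _) (Real.sin_sq_add_cos_sq ω) hAd hBd hu hv
    rw [hG (k+1), hG (k+2)]
    exact hkk
  have hGle : ∀ k ∈ Finset.range (n-2),
      2*Real.cos ω + (G (k+1) - G (k+2))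
        ≤ X (k+1)/X (k+2) + X (k+2)/X (k+1) + 1/(X (k+1) * X (k+2)) :=
    fun k hk => (hkey k (Finset.mem_range.mp hk)).1
  -- the telescoping sum of lower bounds
  have hG1 : G 1 = 2*Real.cos ω := by
    rw [hG 1, hX1]
    simp only [Nat.cast_one, one_mul, mul_one]
    rw [div_self hsω.ne', Real.log_one]
    field_simp
    ring
  have hGn1 : G (n-1) = -(2*Real.cos ω) := by
    rw [hG (n-1), hXn1]
    rw [show ((↑(n-1):ℝ)) = (n:ℝ)-1 from by push_cast [Nat.cast_sub (by omega : 1 ≤ n)]; ring]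
    rw [show ((n:ℝ)-1)*ω = Real.pi - ω from by rw [hω]; field_simp]
    rw [Real.sin_pi_sub, Real.cos_pi_sub]
    simp only [mul_one]
    rw [div_self hsω.ne', Real.log_one]
    field_simp
    ring
  have hGsum : ∑ k ∈ Finset.range (n-2), (2*Real.cos ω + (G (k+1) - G (k+2)))
      = 2*(n:ℝ)*Real.cos ω := by
    rw [Finset.sum_add_distrib, Finset.sum_const, Finset.card_range]
    have htel : ∑ k ∈ Finset.range (n-2), (G (k+1) - G (k+2)) = G 1 - G ((n-2)+1) :=
      Finset.sum_range_sub' (fun k => G (k+1)) (n-2)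
    rw [htel, show (n-2)+1 = n-1 from by omega, hG1, hGn1, nsmul_eq_mul]
    push_cast [Nat.cast_sub (by omega : 2 ≤ n)]
    ring
  have hSlow : 2*(n:ℝ)*Real.cos ω ≤ S := by
    rw [hterm_eq, ← hGsum]
    exact Finset.sum_le_sum hGle
  -- areas
  have hAV : signedArea n V = n := by
    simp only [signedArea]
    rw [Finset.sum_congr rfl (fun (i : ℕ) (_ : i ∈ Finset.range (2*n)) => hunit (i:ℤ))]
    rw [Finset.sum_const, Finset.card_range, nsmul_eq_mul]
    push_cast
    ring
  have hT2 : ∀ i : ℤ, areaForm (Vd i) (Vd (i+1)) = 2 - T i := by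
    intro i
    have h1 := hunit i
    have h2 := hunit (i+1)
    rw [show i+1+1 = i+2 from by ring] at h2
    rw [hVd i, hVd (i+1), show i+1+1 = i+2 from by ring, hT]
    simp only [areaForm, Prod.fst_sub, Prod.snd_sub] at h1 h2 ⊢
    linear_combination h1 + h2
  have hsum2n : ∑ i ∈ Finset.range (2*n), T (i:ℤ) = 2*S := by
    rw [show 2*n = n + n from by ring, Finset.sum_range_add]
    have hshift : ∀ i ∈ Finset.range n, T (((n + i : ℕ)):ℤ) = T (i:ℤ) := by
      intro i _
      rw [show (((n + i : ℕ)):ℤ) = (i:ℤ) + (n:ℤ) from by push_cast; ring, hTper]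
    rw [Finset.sum_congr rfl hshift, ← hS]
    ring
  have hAVd : signedArea n Vd = 2*(n:ℝ) - S := by
    simp only [signedArea]
    rw [Finset.sum_congr rfl (fun (i : ℕ) (_ : i ∈ Finset.range (2*n)) => hT2 (i:ℤ))]
    rw [Finset.sum_sub_distrib, Finset.sum_const, Finset.card_range, hsum2n, nsmul_eq_mul]
    push_cast
    ring
  have hRHS : 4*(n:ℝ)^2*Real.sin (Real.pi/(2*(n:ℝ)))^2 = 2*(n:ℝ)^2*(1 - Real.cos ω) := by
    have h3 : ω = 2*(Real.pi/(2*(n:ℝ))) := by rw [hω]; field_simp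
    have h4 : Real.cos ω = 1 - 2*Real.sin (Real.pi/(2*(n:ℝ)))^2 := by
      rw [h3, Real.cos_two_mul]
      have := Real.sin_sq_add_cos_sq (Real.pi/(2*(n:ℝ)))
      linarith
    rw [h4]
    ring
  -- equality machinery: pinned X values
  have hxpin : S = 2*(n:ℝ)*Real.cos ω →
      ∀ j : ℕ, 1 ≤ j → j ≤ n - 1 → X j = Real.sin ((j:ℝ)*ω)/Real.sin ω := by
    intro hSeq
    have hz : ∀ k ∈ Finset.range (n-2),
        (X (k+1)/X (k+2) + X (k+2)/X (k+1) + 1/(X (k+1) * X (k+2)))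
          - (2*Real.cos ω + (G (k+1) - G (k+2))) = 0 := by
      rw [← Finset.sum_eq_zero_iff_of_nonneg (fun k hk => sub_nonneg.mpr (hGle k hk))]
      rw [Finset.sum_sub_distrib, ← hterm_eq, hGsum, hSeq]
      ring
    intro j h1 h2
    rcases Nat.lt_or_ge j (n-1) with hj | hj
    · have hkmem : j - 1 < n - 2 := by omega
      have heqk := ((hkey (j-1) hkmem).2).mp
        (by have := hz (j-1) (Finset.mem_range.mpr hkmem); linarith)
      have := heqk.1
      rw [show j-1+1 = j from by omega] at this
      exact this
    · have hjeq : j = n-1 := by omega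
      have hkmem : n-3 < n - 2 := by omega
      have heqk := ((hkey (n-3) hkmem).2).mp
        (by have := hz (n-3) (Finset.mem_range.mpr hkmem); linarith)
      have := heqk.2
      rw [show n-3+2 = n-1 from by omega] at this
      rw [hjeq]
      exact this
  -- pinned X values give T ≡ 2 cos ω on a period
  have hsinval : ∀ i : ℕ,
      Real.sin ((↑i:ℝ)*ω) + Real.sin ((↑(i+2):ℝ)*ω) = 2*Real.cos ω * Real.sin ((↑(i+1):ℝ)*ω) := by
    intro i
    rw [show ((↑(i+2):ℝ))*ω = (↑(i+1):ℝ)*ω + ω from by push_cast; ring,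
        show ((↑i:ℝ))*ω = (↑(i+1):ℝ)*ω - ω from by push_cast; ring,
        Real.sin_add, Real.sin_sub]
    ring
  have hT2c : (∀ j : ℕ, 1 ≤ j → j ≤ n - 1 → X j = Real.sin ((j:ℝ)*ω)/Real.sin ω) →
      ∀ i : ℕ, i ≤ n - 1 → T (i:ℤ) = 2*Real.cos ω := by
    intro hXv
    have hXv0 : ∀ j : ℕ, j ≤ n → X j = Real.sin ((j:ℝ)*ω)/Real.sin ω := by
      intro j hjn
      rcases Nat.eq_zero_or_pos j with h0 | h0
      · rw [h0, hX0]
        simp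
      · rcases Nat.lt_or_ge j n with h1 | h1
        · exact hXv j (by omega) (by omega)
        · have hjn' : j = n := by omega
          rw [hjn', hXn, hωπ, Real.sin_pi]
          norm_num
    intro i hi
    rcases Nat.lt_or_ge i (n-1) with hi' | hi'
    · have hrec := hXrec i
      rw [hXv0 i (by omega), hXv0 (i+1) (by omega), hXv0 (i+2) (by omega)] at hrec
      have hpos := hsin (i+1) (by omega) (by omega)
      have hid := hsinval i
      have hgoal : T (i:ℤ) * Real.sin ((↑(i+1):ℝ)*ω) = 2*Real.cos ω * Real.sin ((↑(i+1):ℝ)*ω) := by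
        field_simp at hrec
        push_cast at hrec hid ⊢
        rw [mul_comm ω ((i:ℝ) + 1), mul_comm ω (i:ℝ)] at hrec
        linear_combination hid - hrec
      exact mul_right_cancel₀ hpos.ne' hgoal
    · -- i = n-1 : use the Y-sequence
      have hYv : ∀ j : ℕ, 1 ≤ j → j ≤ n - 1 → Y j = Real.sin (((j:ℝ)-1)*ω)/Real.sin ω := by
        intro j
        induction j with
        | zero => omega
        | succ p ih =>
          intro _ hp
          rcases Nat.eq_zero_or_pos p with h0 | h0
          · rw [h0]
            rw [hY1]
            norm_num
          · have hw := hWr p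
            have hxp := hXv p (by omega) (by omega)
            have hxp1 := hXv (p+1) (by omega) (by omega)
            have hyP := ih (by omega) (by omega)
            have hsp := hsin p (by omega) (by omega)
            have hsp1 := hsin (p+1) (by omega) (by omega)
            have hidp : Real.sin ((↑p:ℝ)*ω)^2
                = Real.sin ω^2 + Real.sin ((↑(p+1):ℝ)*ω) * Real.sin (((↑p:ℝ)-1)*ω) := by
              rw [show ((↑(p+1):ℝ))*ω = (↑p:ℝ)*ω + ω from by push_cast; ring,
                  show (((↑p:ℝ))-1)*ω = (↑p:ℝ)*ω - ω from by ring,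
                  Real.sin_add, Real.sin_sub]
              have e1 := Real.sin_sq_add_cos_sq ((↑p:ℝ)*ω)
              have e2 := Real.sin_sq_add_cos_sq ω
              linear_combination (Real.sin ω^2)*e1 - (Real.sin ((↑p:ℝ)*ω)^2)*e2
            rw [hxp, hxp1, hyP] at hw
            rw [show ((↑(p+1):ℝ))-1 = (↑p:ℝ) from by push_cast; ring]
            rw [eq_div_iff hsω.ne']
            have hw2 : Real.sin ((p:ℝ)*ω) * Y (p+1) * (Real.sin ω * Real.sin ω)
                - Real.sin ω * (Real.sin (((p:ℝ)+1)*ω) * Real.sin (((p:ℝ)-1)*ω))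
                = Real.sin ω * (Real.sin ω * Real.sin ω) := by
              field_simp at hw
              push_cast at hw
              rw [mul_comm ω ((p:ℝ) + 1), mul_comm ω ((p:ℝ) - 1)] at hw
              linear_combination Real.sin ω * hw
            push_cast at hidp
            have h3 : (Real.sin ((p:ℝ)*ω) * Real.sin ω) * (Y (p+1) * Real.sin ω)
                = (Real.sin ((p:ℝ)*ω) * Real.sin ω) * Real.sin ((p:ℝ)*ω) := by
              linear_combination hw2 - Real.sin ω * hidp
            exact mul_left_cancel₀ (mul_ne_zero hsp.ne' hsω.ne') h3
      have hyn1 := hYv (n-1) (by omega) (le_refl _)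
      have hieq : (i:ℤ) = (n:ℤ)-1 := by omega
      rw [hieq, hTn1, hyn1]
      rw [show ((↑(n-1):ℝ))-1 = (n:ℝ)-2 from by push_cast [Nat.cast_sub (by omega : 1 ≤ n)]; ring]
      rw [show ((n:ℝ)-2)*ω = Real.pi - 2*ω from by rw [hω]; field_simp]
      rw [Real.sin_pi_sub, Real.sin_two_mul]
      field_simp
  -- extend to all integers
  have hTall : (∀ i : ℕ, i ≤ n - 1 → T (i:ℤ) = 2*Real.cos ω) → ∀ i : ℤ, T i = 2*Real.cos ω := by
    intro hN
    have hper2 : ∀ (q : ℤ) (r : ℤ), T (r + q*(n:ℤ)) = T r := by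
      intro q
      induction q using Int.induction_on with
      | zero => intro r; norm_num
      | succ p ih =>
        intro r
        rw [show r + ((p:ℤ)+1)*(n:ℤ) = (r + (p:ℤ)*(n:ℤ)) + (n:ℤ) from by ring, hTper, ih]
      | pred p ih =>
        intro r
        rw [show r + (-(p:ℤ)-1)*(n:ℤ) = (r + (-(p:ℤ))*(n:ℤ)) - (n:ℤ) from by ring]
        have h := hTper ((r + (-(p:ℤ))*(n:ℤ)) - (n:ℤ))
        rw [sub_add_cancel] at h
        rw [← h]
        exact ih r
    intro i
    have hdiv := Int.emod_add_mul_ediv i (n:ℤ)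
    have hr0 : 0 ≤ i % (n:ℤ) := Int.emod_nonneg i (by exact_mod_cast hn0.ne')
    have hrn : i % (n:ℤ) < (n:ℤ) := Int.emod_lt_of_pos i (by exact_mod_cast hn0)
    have h1 : T i = T (i % (n:ℤ)) := by
      conv_lhs => rw [← hdiv]
      rw [show i % (n:ℤ) + (n:ℤ)*(i / (n:ℤ)) = i % (n:ℤ) + (i / (n:ℤ))*(n:ℤ) from by ring]
      exact hper2 (i / (n:ℤ)) (i % (n:ℤ))
    rw [h1, show i % (n:ℤ) = (((i % (n:ℤ)).toNat : ℕ) : ℤ) from (Int.toNat_of_nonneg hr0).symm]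
    exact hN (i % (n:ℤ)).toNat (by omega)
  -- final assembly
  rw [hAV, hAVd]
  have hRHS' : 4*(n:ℝ)^2*Real.sin (Real.pi/(2*(n:ℝ)))^2 = 2*(n:ℝ)^2*(1 - Real.cos ω) := hRHS
  constructor
  · rw [hRHS']
    nlinarith [mul_le_mul_of_nonneg_left hSlow hnR.le]
  constructor
  · intro heq
    rw [hRHS'] at heq
    have hSeq : S = 2*(n:ℝ)*Real.cos ω := by
      have h1 : (n:ℝ) * S = (n:ℝ) * (2*(n:ℝ)*Real.cos ω) := by nlinarith [heq]
      exact mul_left_cancel₀ hnR.ne' h1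
    have hfin := hTall (hT2c (hxpin hSeq))
    intro i
    have h := hfin (i-1)
    rw [hT, show i-1+2 = i+1 from by ring] at h
    exact h
  · intro hreg
    have hTi : ∀ i : ℤ, T i = 2*Real.cos ω := by
      intro i
      have h := hreg (i+1)
      rw [show i+1-1 = i from by ring, show i+1+1 = i+2 from by ring] at h
      rw [hT]
      exact h
    have hSval : S = (n:ℝ) * (2*Real.cos ω) := by
      rw [hS, Finset.sum_congr rfl (fun (i:ℕ) (_ : i ∈ Finset.range n) => hTi (i:ℤ)),
        Finset.sum_const, Finset.card_range, nsmul_eq_mul]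
    rw [hRHS', hSval]
    ring
end

section
/- Let n ≥ 3 and let V : ℤ → ℝ² satisfy [V_k, V_{k+1}] = 1 and V_{k+n} = −V_k for all k, and set c_k = [V_{k−1}, V_{k+1}]. Let D(a_1, …, a_m) denote the determinant of the m×m tridiagonal matrix with diagonal entries a_1, …, a_m, off-diagonal entries (immediately above and below the diagonal) equal to 1, and remaining entries 0. Then D(c_1, …, c_{n−2}) = 1, D(c_0, c_1, …, c_{n−2}) = 0, and D(c_1, …, c_{n−1}) = 0. -/
/-- `tridiagDet m d` is the determinant `D(d 0, …, d (m−1))` of the `m×m` tridiagonal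
matrix with diagonal entries `d 0, …, d (m−1)`, entries immediately above and below the
diagonal equal to `1`, and remaining entries `0`. -/
def tridiagDet (m : ℕ) (d : ℕ → ℝ) : ℝ :=
  (Matrix.of fun k l : Fin m =>
    if (k : ℕ) = (l : ℕ) then d k
    else if (k : ℕ) + 1 = (l : ℕ) ∨ (l : ℕ) + 1 = (k : ℕ) then 1 else 0).det

lemma tridiagDet_zero (d : ℕ → ℝ) : tridiagDet 0 d = 1 := by
  simp [tridiagDet, Matrix.det_isEmpty]

lemma tridiagDet_one (d : ℕ → ℝ) : tridiagDet 1 d = d 0 := by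
  simp [tridiagDet, Matrix.det_fin_one]

lemma tridiagDet_rec (m : ℕ) (d : ℕ → ℝ) :
    tridiagDet (m + 2) d
      = d 0 * tridiagDet (m + 1) (fun k => d (k + 1))
        - tridiagDet m (fun k => d (k + 2)) := by
  set A : Matrix (Fin (m+2)) (Fin (m+2)) ℝ := Matrix.of fun k l : Fin (m+2) =>
    if (k : ℕ) = (l : ℕ) then d k
    else if (k : ℕ) + 1 = (l : ℕ) ∨ (l : ℕ) + 1 = (k : ℕ) then 1 else 0 with hA
  have h1 : (A.submatrix Fin.succ (Fin.succAbove 0)).det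
      = tridiagDet (m + 1) (fun k => d (k + 1)) := by
    congr 1
    ext k l
    simp [hA, Fin.succAbove, tridiagDet]
  set B : Matrix (Fin (m+1)) (Fin (m+1)) ℝ := A.submatrix Fin.succ (Fin.succAbove 1) with hB
  have h2 : (B.submatrix Fin.succ Fin.succ).det
      = tridiagDet m (fun k => d (k + 2)) := by
    congr 1
    ext k l
    have hl : ((Fin.succAbove 1 (Fin.succ l)) : ℕ) = (l : ℕ) + 2 := by
      simp [Fin.succAbove, Fin.lt_iff_val_lt_val]
    simp [hB, hA, tridiagDet, Matrix.submatrix_apply, hl]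
  have hBdet : B.det = tridiagDet m (fun k => d (k + 2)) := by
    rw [Matrix.det_succ_column_zero]
    rw [Fin.sum_univ_succ]
    have hb00 : B 0 0 = 1 := by
      simp [hB, hA, Fin.succAbove]
    have hrest : ∀ k : Fin m, B k.succ 0 = 0 := by
      intro k
      simp [hB, hA, Fin.succAbove]
    simp only [hrest, hb00]
    simp [h2]
  rw [show tridiagDet (m+2) d = A.det from rfl, Matrix.det_succ_row_zero]
  rw [Fin.sum_univ_succ, Fin.sum_univ_succ]
  have ha00 : A 0 0 = d 0 := by simp [hA]
  have ha01 : A 0 1 = 1 := by simp [hA]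
  have harest : ∀ j : Fin m, A 0 j.succ.succ = 0 := by
    intro j
    simp [hA]
  simp only [ha00, ha01, harest, mul_zero, zero_mul, mul_one, Finset.sum_const_zero,
    Fin.val_zero, Fin.val_succ, pow_zero, pow_succ, pow_zero]
  rw [h1]
  rw [Fin.succ_zero_eq_one, ha01, ← hB, hBdet]
  ring

section
variable (V : ℤ → ℝ × ℝ)
    (hunit : ∀ k : ℤ, areaForm (V k) (V (k + 1)) = 1)
    (c : ℤ → ℝ) (hc : ∀ k : ℤ, c k = areaForm (V (k - 1)) (V (k + 1)))

include hunit hc in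
lemma vec_rec (k : ℤ) : V (k + 1) = c k • V k - V (k - 1) := by
  have h1 := hunit (k - 1)
  rw [show k - 1 + 1 = k by ring] at h1
  have h2 := hunit k
  have h3 := hc k
  simp only [areaForm] at h1 h2 h3
  have : (c k • V k - V (k-1)) = (c k * (V k).1 - (V (k-1)).1, c k * (V k).2 - (V (k-1)).2) := by
    simp [Prod.ext_iff]
  rw [this]
  have e1 : (V (k+1)).1 = c k * (V k).1 - (V (k-1)).1 := by
    rw [h3]; linear_combination (-(V (k+1)).1) * h1 - (V (k-1)).1 * h2
  have e2 : (V (k+1)).2 = c k * (V k).2 - (V (k-1)).2 := by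
    rw [h3]; linear_combination (-(V (k+1)).2) * h1 - (V (k-1)).2 * h2
  exact Prod.ext e1 e2

include hunit hc in
lemma key_s3 (m : ℕ) : ∀ i : ℤ, areaForm (V i) (V (i + 1 + (m : ℤ)))
    = tridiagDet m (fun k => c (i + 1 + (k : ℤ))) := by
  induction m using Nat.strong_induction_on with
  | _ m ih =>
    match m with
    | 0 =>
      intro i
      rw [tridiagDet_zero]
      simpa using hunit i
    | 1 =>
      intro i
      rw [tridiagDet_one]
      have := hc (i + 1)
      rw [show i + 1 - 1 = i by ring] at this
      rw [show i + 1 + ((1:ℕ):ℤ) = i + 1 + 1 by push_cast; ring,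
        show i + 1 + ((0:ℕ):ℤ) = i + 1 by push_cast; ring]
      exact this.symm
    | (m + 2) =>
      intro i
      have ih1 := ih (m + 1) (by omega) (i + 1)
      have ih0 := ih m (by omega) (i + 2)
      -- the vector recurrence: V i = c (i+1) • V (i+1) - V (i+2)
      have hv := vec_rec V hunit c hc (i + 1)
      rw [show i + 1 - 1 = i by ring] at hv
      have hVi : V i = c (i + 1) • V (i + 1) - V (i + 1 + 1) := by
        rw [hv]; ring_nf
      have hlin : ∀ w : ℝ × ℝ, areaForm (V i) w
          = c (i + 1) * areaForm (V (i + 1)) w - areaForm (V (i + 1 + 1)) w := by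
        intro w
        rw [hVi]
        simp [areaForm, Prod.smul_def]
        ring
      rw [hlin]
      rw [tridiagDet_rec]
      have ef1 : (fun k : ℕ => c (i + 1 + ((k + 1 : ℕ) : ℤ)))
          = (fun k : ℕ => c (i + 1 + 1 + (k : ℤ))) := by
        funext k; congr 1; push_cast; ring
      have ef2 : (fun k : ℕ => c (i + 1 + ((k + 2 : ℕ) : ℤ)))
          = (fun k : ℕ => c (i + 2 + 1 + (k : ℤ))) := by
        funext k; congr 1; push_cast; ring
      simp only [ef1, ef2]
      rw [show i + 1 + 1 + ((m+1:ℕ):ℤ) = i + 1 + ((m+2:ℕ):ℤ) by push_cast; ring] at ih1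
      rw [show i + 2 + 1 + ((m:ℕ):ℤ) = i + 1 + ((m+2:ℕ):ℤ) by push_cast; ring,
          show (i + 2 : ℤ) = i + 1 + 1 by ring] at ih0
      rw [ih1, ih0,
        show (fun k : ℕ => c (i + 1 + 1 + 1 + (k:ℤ))) = fun k : ℕ => c (i + 2 + 1 + (k:ℤ)) by
          funext k; congr 1; ring]
      norm_num
end

/-- **Lemma (closing conditions).** For an anti-periodic normalized polygon
(`V (k+n) = −V k`, `[V k, V (k+1)] = 1`) with `c k = [V (k−1), V (k+1)]`, the
tridiagonal determinants satisfy `D(c 1, …, c (n−2)) = 1`,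
`D(c 0, c 1, …, c (n−2)) = 0` and `D(c 1, …, c (n−1)) = 0`. -/
theorem closing_conditions (n : ℕ) (hn : 3 ≤ n) (V : ℤ → ℝ × ℝ)
    (hunit : ∀ k : ℤ, areaForm (V k) (V (k + 1)) = 1)
    (hsym : ∀ k : ℤ, V (k + n) = -V k)
    (c : ℤ → ℝ) (hc : ∀ k : ℤ, c k = areaForm (V (k - 1)) (V (k + 1))) :
    tridiagDet (n - 2) (fun k => c (1 + k)) = 1 ∧
    tridiagDet (n - 1) (fun k => c k) = 0 ∧
    tridiagDet (n - 1) (fun k => c (1 + k)) = 0 := by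
  have hVn1 : V ((n : ℤ) - 1) = -V (-1) := by
    have := hsym (-1)
    rw [show (-1 : ℤ) + n = (n : ℤ) - 1 by ring] at this
    exact this
  have hVn : V (n : ℤ) = -V 0 := by
    have := hsym 0
    rwa [show (0 : ℤ) + n = (n : ℤ) by ring] at this
  have hneg : ∀ v w : ℝ × ℝ, areaForm v (-w) = -areaForm v w := by
    intro v w; simp [areaForm]; ring
  have hm1 := hunit (-1)
  rw [show (-1 : ℤ) + 1 = 0 by ring] at hm1
  refine ⟨?_, ?_, ?_⟩
  · have h := key_s3 V hunit c hc (n - 2) 0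
    rw [show (0 : ℤ) + 1 + ((n - 2 : ℕ) : ℤ) = (n : ℤ) - 1 by
      rw [Nat.cast_sub (by omega)]; push_cast; ring] at h
    rw [hVn1, hneg] at h
    have : areaForm (V 0) (V (-1)) = -1 := by
      simp only [areaForm] at hm1 ⊢; linarith [hm1]
    rw [this] at h
    rw [show (fun k : ℕ => c (1 + (k : ℤ))) = (fun k : ℕ => c (0 + 1 + (k : ℤ))) by
      funext k; norm_num]
    rw [← h]; ring
  · have h := key_s3 V hunit c hc (n - 1) (-1)
    rw [show (-1 : ℤ) + 1 + ((n - 1 : ℕ) : ℤ) = (n : ℤ) - 1 by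
      rw [Nat.cast_sub (by omega)]; push_cast; ring] at h
    rw [hVn1, hneg] at h
    have : areaForm (V (-1)) (V (-1)) = 0 := by simp only [areaForm]; ring
    rw [this] at h
    rw [show (fun k : ℕ => c (k : ℤ)) = (fun k : ℕ => c (-1 + 1 + (k : ℤ))) by
      funext k; norm_num]
    rw [← h]; ring
  · have h := key_s3 V hunit c hc (n - 1) 0
    rw [show (0 : ℤ) + 1 + ((n - 1 : ℕ) : ℤ) = (n : ℤ) by
      rw [Nat.cast_sub (by omega)]; push_cast; ring] at h
    rw [hVn, hneg] at h
    have : areaForm (V 0) (V 0) = 0 := by simp only [areaForm]; ring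
    rw [this] at h
    rw [show (fun k : ℕ => c (1 + (k : ℤ))) = (fun k : ℕ => c (0 + 1 + (k : ℤ))) by
      funext k; norm_num]
    rw [← h]; ring
end
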